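/- With the above assumptions on T: the diameters D_n(ω) = diam(I_{ω_1…ω_n}) converge to 0 uniformly in ω ∈ Σ as n → ∞, and moreover lim_{n→∞} sup_{ω∈Σ} |−(1/n) log D_n(ω) − A_n g(ω)| = 0. -/

import Mathlib

open MeasureTheory Set Filter Topology

noncomputable section

/-- A finite measurable partition of the space. -/
def IsMeasPartition {X : Type*} [MeasurableSpace X] (P : Finset (Set X)) : Prop :=
  (∀ s ∈ P, MeasurableSet s) ∧ ((P : Set (Set X)).PairwiseDisjoint id) ∧ (⋃ s ∈ P, s) = univ

/-- Shannon entropy of the refinement `⋁_{i<n} T^{-i} P` of a finite partition `P`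
under the first `n` iterates of `T`, with respect to the measure `μ`. -/
def partEntropy {X : Type*} [MeasurableSpace X] (T : X → X) (μ : Measure X)
    (P : Finset (Set X)) (n : ℕ) : ℝ :=
  ∑ c : Fin n → {s // s ∈ P},
    Real.negMulLog (μ (⋂ i : Fin n, T^[(i : ℕ)] ⁻¹' ((c i : Set X)))).toReal

/-- The Kolmogorov–Sinai (metric) entropy of the measure `μ` for the map `T`:
the supremum over finite measurable partitions `P` of
`lim_n (1/n) H(⋁_{i<n} T^{-i}P)`, the limit being computed as an infimum (by
subadditivity of the entropy sequence). -/
def metricEntropy {X : Type*} [MeasurableSpace X] (T : X → X) (μ : Measure X) : ℝ :=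
  ⨆ P : {P : Finset (Set X) // IsMeasPartition P},
    ⨅ n : ℕ, partEntropy T μ (P : Finset (Set X)) (n + 1) / (n + 1)

/-- Birkhoff (ergodic) average `A_n f(x) = (1/n) ∑_{j<n} f(T^j x)`. -/
def birkhoff {X E : Type*} [AddCommMonoid E] [Module ℝ E]
    (T : X → X) (f : X → E) (n : ℕ) (x : X) : E :=
  (n : ℝ)⁻¹ • ∑ j ∈ Finset.range n, f (T^[j] x)

/-- The full shift space `Σ = {1,…,m}^ℕ`. -/
abbrev SymbSp (m : ℕ) := ℕ → Fin m

/-- The shift map `σ` on `Σ`. -/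
def shift {m : ℕ} (ω : SymbSp m) : SymbSp m := fun n => ω (n + 1)

/-- The set `M(Σ,σ)` of shift-invariant Borel probability measures on `Σ`. -/
def shiftInvMeasures (m : ℕ) : Set (Measure (SymbSp m)) :=
  {μ | IsProbabilityMeasure μ ∧ μ.map shift = μ}

/-- The level set `X_α = {ω ∈ Σ : lim_n A_n f(ω) = α}` of a potential `f` on `Σ`. -/
def symbLevelSet {m : ℕ} {E : Type*} [AddCommMonoid E] [Module ℝ E] [TopologicalSpace E]
    (f : SymbSp m → E) (α : E) : Set (SymbSp m) :=
  {ω | Tendsto (fun n => birkhoff shift f n ω) atTop (𝓝 α)}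

/-- A piecewise `C¹` expanding (possibly non-uniformly hyperbolic) interval map:
`m` pairwise non-overlapping subintervals `I 1, …, I m` of `[0,1]`, a map `T` which
restricted to each `I i` is a `C¹` surjection onto `[0,1]` (with derivative `T'`),
a unique fixed point `fixPt i` of `T` in each `I i`, and `T' > 1` away from the
fixed points. -/
structure PCSystem (m : ℕ) where
  hm : 0 < m
  I : Fin m → Set ℝ
  T : ℝ → ℝ
  T' : ℝ → ℝ
  fixPt : Fin m → ℝ
  hI : ∀ i, ∃ a b : ℝ, a < b ∧ I i = Icc a b
  hIsub : ∀ i, I i ⊆ Icc 0 1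
  hdisj : ∀ i j, i ≠ j → Disjoint (interior (I i)) (interior (I j))
  hTmeas : Measurable T
  hT'meas : Measurable T'
  hmapsto : ∀ i, MapsTo T (I i) (Icc 0 1)
  hsurj : ∀ i, SurjOn T (I i) (Icc 0 1)
  hderiv : ∀ i, ∀ x ∈ I i, HasDerivWithinAt T (T' x) (I i) x
  hT'cont : ∀ i, ContinuousOn T' (I i)
  hfixmem : ∀ i, fixPt i ∈ I i
  hfix : ∀ i, T (fixPt i) = fixPt i
  hfixuniq : ∀ i, ∀ y ∈ I i, T y = y → y = fixPt i
  hexp : ∀ y ∈ ⋃ i, I i, y ∉ range fixPt → 1 < T' y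

namespace PCSystem

variable {m : ℕ} (S : PCSystem m)

/-- The attractor `Λ = {x ∈ ⋃ I_i : T^n x ∈ [0,1] for all n}`. -/
def attractor : Set ℝ :=
  {x | (x ∈ ⋃ i, S.I i) ∧ ∀ n : ℕ, S.T^[n] x ∈ Icc (0:ℝ) 1}

/-- The basic interval `I_w = T_{w₁}∘⋯∘T_{wₙ}([0,1])` coded by the word `w`,
described via the forward map: `I_{i·w} = I_i ∩ T⁻¹(I_w)`. -/
def cyl (S : PCSystem m) : List (Fin m) → Set ℝ
  | [] => Icc 0 1
  | i :: w => S.I i ∩ S.T ⁻¹' (cyl S w)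

end PCSystem

/-- The word `ω₁…ωₙ` of the first `n` symbols of `ω`. -/
def word {m : ℕ} (ω : SymbSp m) (n : ℕ) : List (Fin m) := List.ofFn fun j : Fin n => ω j

namespace PCSystem

variable {m : ℕ} (S : PCSystem m)

/-- The coding map `Π : Σ → Λ`, `Π(ω) = lim_n T_{ω₁}∘⋯∘T_{ωₙ}([0,1])`
(realized as the supremum of the nested intersection `⋂_n I_{ω|_n}`, which is
a single point). -/
def code (ω : SymbSp m) : ℝ := sSup (⋂ n : ℕ, S.cyl (word ω n))

/-- The geometric potential `g(ω) = −log T'_{ω₁}(Π(σω)) = log T'(Π(ω))`. -/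
def g (ω : SymbSp m) : ℝ := Real.log (S.T' (S.code ω))

/-- `Σ̃ = {ω : liminf_n A_n g(ω) > 0}`. -/
def SigmaTilde : Set (SymbSp m) :=
  {ω | 0 < atTop.liminf fun n => birkhoff shift S.g n ω}

/-- The set `M(Λ,T)` of `T`-invariant Borel probability measures on the attractor `Λ`. -/
def invMeasures : Set (Measure ℝ) :=
  {μ | IsProbabilityMeasure μ ∧ μ.map S.T = μ ∧ μ S.attractorᶜ = 0}

/-- Lyapunov exponent `λ(μ,T) = ∫ log|T'| dμ` of a measure on the attractor. -/
def lyap (μ : Measure ℝ) : ℝ := ∫ x, Real.log |S.T' x| ∂μ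

/-- Lyapunov exponent `λ(μ,σ) = ∫ g dμ` of a measure on the shift space. -/
def lyapSymb (μ : Measure (SymbSp m)) : ℝ := ∫ ω, S.g ω ∂μ

/-- The set of parabolic fixed points, i.e. those fixed points `x_j` with `T'(x_j) = 1`. -/
def parabolicSet : Set ℝ := {y | ∃ i, y = S.fixPt i ∧ S.T' y = 1}

/-- The level set `Λ_α = {x ∈ Λ : lim_n (1/n)∑_{j<n} F(T^j x) = α}`. -/
def levelSet {E : Type*} [AddCommMonoid E] [Module ℝ E] [TopologicalSpace E]
    (F : ℝ → E) (α : E) : Set ℝ :=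
  {x | x ∈ S.attractor ∧ Tendsto (fun n => birkhoff S.T F n x) atTop (𝓝 α)}

/-- `Λ̃`: the set of points of the attractor having exactly two codings. -/
def doubleCoded : Set ℝ := {x | x ∈ S.attractor ∧ (S.code ⁻¹' {x}).ncard = 2}

end PCSystem

/-!
Each cylinder `I_{iw}` is a closed interval mapped increasingly by `T` onto `I_w`. As `T' ≥ 1`,
with equality only at the finitely many fixed points, `x ↦ T x - x` is strictly increasing on
every `I_i`, and compactness makes this uniform: `T` stretches every interval of length `≥ ε`
inside some `I_i` by a fixed amount `c > 0`. Hence cylinders of length `n > 1 / c` have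
diameter `< ε`. By the mean value theorem `-log D_n(ω) = ∑_{j<n} log T'(ξ_j)` with `ξ_j` in the
cylinder of `σ^j ω` of length `n - j`, which also contains `Π(σ^j ω)`; by uniform continuity of
`log T'` all but the last `K` terms are `η`-close to `g(σ^j ω)`, and the last `K` are bounded.
-/

open Metric

theorem StrictMonoOn.inter_preimage_Icc {α β : Type*} [LinearOrder α] [Preorder β] {f : α → β}
    {s : Set α} (hf : StrictMonoOn f s) (hs : s.OrdConnected) {u v : α} (hu : u ∈ s)
    (hv : v ∈ s) : s ∩ f ⁻¹' Icc (f u) (f v) = Icc u v := by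
  ext x
  constructor
  · rintro ⟨hx, hux, hxv⟩
    exact ⟨(hf.le_iff_le hu hx).1 hux, (hf.le_iff_le hx hv).1 hxv⟩
  · intro hx
    have hxs := hs.out hu hv hx
    exact ⟨hxs, (hf.le_iff_le hu hxs).2 hx.1, (hf.le_iff_le hxs hv).2 hx.2⟩

theorem Real.Icc_subset_closure_Icc_diff {a b : ℝ} (hab : a < b) {F : Set ℝ} (hF : F.Countable) :
    Icc a b ⊆ closure (Icc a b \ F) := by
  calc Icc a b = closure (Ioo a b) := (closure_Ioo hab.ne).symm
    _ ⊆ closure (Ioo a b ∩ Fᶜ) :=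
      closure_minimal ((hF.dense_compl ℝ).open_subset_closure_inter isOpen_Ioo) isClosed_closure
    _ ⊆ closure (Icc a b \ F) := closure_mono fun x hx => ⟨Ioo_subset_Icc_self hx.1, hx.2⟩

theorem abs_sum_range_le_of_head {f : ℕ → ℝ} {n K : ℕ} {a b : ℝ} (hK : K ≤ n) (ha : 0 ≤ a)
    (hhead : ∀ j < n - K, |f j| ≤ a) (hall : ∀ j < n, |f j| ≤ b) :
    |∑ j ∈ Finset.range n, f j| ≤ n * a + K * b := by
  obtain ⟨l, rfl⟩ := Nat.exists_eq_add_of_le' hK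
  rw [Finset.sum_range_add]
  calc |∑ j ∈ Finset.range l, f j + ∑ j ∈ Finset.range K, f (l + j)|
      ≤ ∑ j ∈ Finset.range l, |f j| + ∑ j ∈ Finset.range K, |f (l + j)| :=
        (abs_add_le _ _).trans
          (add_le_add (Finset.abs_sum_le_sum_abs _ _) (Finset.abs_sum_le_sum_abs _ _))
    _ ≤ ∑ _j ∈ Finset.range l, a + ∑ _j ∈ Finset.range K, b := by
        gcongr with j hj j hj <;> simp only [Finset.mem_range] at hj
        · exact hhead j (by omega)
        · exact hall _ (by omega)
    _ ≤ ((l + K : ℕ) : ℝ) * a + K * b := by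
        simp only [Finset.sum_const, Finset.card_range, nsmul_eq_mul, Nat.cast_add]
        nlinarith

@[simp]
lemma length_word {m : ℕ} (ω : SymbSp m) (n : ℕ) : (word ω n).length = n :=
  List.length_ofFn

@[simp]
lemma word_zero {m : ℕ} (ω : SymbSp m) : word ω 0 = [] := rfl

lemma word_succ {m : ℕ} (ω : SymbSp m) (n : ℕ) : word ω (n + 1) = ω 0 :: word (shift ω) n := by
  simp [word, List.ofFn_succ, shift]

namespace PCSystem

variable {m : ℕ} (S : PCSystem m)

lemma isCompact_I (i : Fin m) : IsCompact (S.I i) := by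
  obtain ⟨a, b, -, h⟩ := S.hI i
  exact h ▸ isCompact_Icc

lemma ordConnected_I (i : Fin m) : (S.I i).OrdConnected := by
  obtain ⟨a, b, -, h⟩ := S.hI i
  exact h ▸ ordConnected_Icc

lemma continuousOn_T (i : Fin m) : ContinuousOn S.T (S.I i) :=
  fun x hx => (S.hderiv i x hx).continuousWithinAt

lemma hasDerivAt_of_mem_interior {i : Fin m} {x : ℝ} (hx : x ∈ interior (S.I i)) :
    HasDerivAt S.T (S.T' x) x :=
  (S.hderiv i x (interior_subset hx)).hasDerivAt (mem_interior_iff_mem_nhds.1 hx)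

lemma one_le_T' {i : Fin m} {x : ℝ} (hx : x ∈ S.I i) : 1 ≤ S.T' x := by
  obtain ⟨a, b, hab, hI⟩ := S.hI i
  have hdense : S.I i ⊆ closure (S.I i \ range S.fixPt) :=
    hI ▸ Real.Icc_subset_closure_Icc_diff hab (countable_range _)
  exact continuousWithinAt_const.closure_le (hdense hx) ((S.hT'cont i x hx).mono sdiff_subset)
    fun y hy => (S.hexp y (mem_iUnion.2 ⟨i, hy.1⟩) hy.2).le

lemma strictMonoOn_T_sub_id (i : Fin m) : StrictMonoOn (fun x => S.T x - x) (S.I i) := by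
  have hmono : MonotoneOn (fun x => S.T x - x) (S.I i) :=
    monotoneOn_of_hasDerivWithinAt_nonneg (S.ordConnected_I i).convex
      ((S.continuousOn_T i).sub continuousOn_id)
      (fun x hx => ((S.hasDerivAt_of_mem_interior hx).sub (hasDerivAt_id x)).hasDerivWithinAt)
      (fun x hx => sub_nonneg.2 (S.one_le_T' (interior_subset hx)))
  intro u hu v hv huv
  refine (hmono hu hv huv.le).lt_of_ne fun heq => ?_
  -- `T x - x` would be constant on `[u, v]`, forcing `T' = 1` at a non-fixed point of `(u, v)`
  have hsub : Icc u v ⊆ S.I i := (S.ordConnected_I i).out hu hv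
  obtain ⟨y, hy, hyfix⟩ := ((Ioo_infinite huv).sdiff (finite_range S.fixPt)).nonempty
  have hconst : (fun x => S.T x - x) =ᶠ[𝓝 y] fun _ => S.T u - u := by
    filter_upwards [Ioo_mem_nhds hy.1 hy.2] with x hx
    have hxI := hsub ⟨hx.1.le, hx.2.le⟩
    exact le_antisymm ((hmono hxI hv hx.2.le).trans heq.ge) (hmono hu hxI hx.1.le)
  have hyI : y ∈ interior (S.I i) := interior_mono hsub (by rwa [interior_Icc])
  have hderiv := ((S.hasDerivAt_of_mem_interior hyI).sub (hasDerivAt_id y)).unique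
    ((hasDerivAt_const y _).congr_of_eventuallyEq hconst)
  exact (S.hexp y (mem_iUnion.2 ⟨i, interior_subset hyI⟩) hyfix).ne' (by linarith)

lemma strictMonoOn_T (i : Fin m) : StrictMonoOn S.T (S.I i) := fun u hu v hv huv => by
  have := S.strictMonoOn_T_sub_id i hu hv huv
  simp only at this
  linarith

lemma continuousOn_T_iUnion : ContinuousOn S.T (⋃ i, S.I i) :=
  (locallyFinite_of_finite _).continuousOn_iUnion (fun i => (S.isCompact_I i).isClosed)
    S.continuousOn_T

lemma continuousOn_log_T' : ContinuousOn (fun x => Real.log (S.T' x)) (⋃ i, S.I i) := by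
  refine ((locallyFinite_of_finite _).continuousOn_iUnion (fun i => (S.isCompact_I i).isClosed)
    S.hT'cont).log fun x hx => ?_
  obtain ⟨i, hi⟩ := mem_iUnion.1 hx
  exact (one_pos.trans_le (S.one_le_T' hi)).ne'

lemma exists_pos_add_le_T_sub_T {ε : ℝ} (hε : 0 < ε) : ∃ c > 0, ∀ i, ∀ u ∈ S.I i, ∀ v ∈ S.I i,
    u + ε ≤ v → v - u + c ≤ S.T v - S.T u := by
  set K : Set (ℝ × ℝ) := ⋃ i, S.I i ×ˢ S.I i ∩ {p | p.1 + ε ≤ p.2}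
  have hK : IsCompact K := isCompact_iUnion fun i =>
    ((S.isCompact_I i).prod (S.isCompact_I i)).inter_right
      (isClosed_le (by fun_prop) (by fun_prop))
  have hKU : MapsTo Prod.fst K (⋃ i, S.I i) ∧ MapsTo Prod.snd K (⋃ i, S.I i) := by
    constructor <;> rintro p ⟨-, ⟨i, rfl⟩, ⟨hp1, hp2⟩, -⟩ <;> exact mem_iUnion.2 ⟨i, by assumption⟩
  have hcont : ContinuousOn (fun p : ℝ × ℝ => (S.T p.2 - p.2) - (S.T p.1 - p.1)) K :=
    ((S.continuousOn_T_iUnion.comp continuousOn_snd hKU.2).sub continuousOn_snd).sub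
      ((S.continuousOn_T_iUnion.comp continuousOn_fst hKU.1).sub continuousOn_fst)
  have hpos : ∀ p ∈ K, 0 < (S.T p.2 - p.2) - (S.T p.1 - p.1) := by
    rintro p ⟨-, ⟨i, rfl⟩, ⟨hp1, hp2⟩, hp⟩
    exact sub_pos.2 (S.strictMonoOn_T_sub_id i hp1 hp2 (by linarith [hp.out]))
  obtain ⟨c, hc, hcK⟩ := hK.exists_forall_le' hcont hpos
  refine ⟨c, hc, fun i u hu v hv huv => ?_⟩
  have := hcK (u, v) (mem_iUnion.2 ⟨i, ⟨hu, hv⟩, huv⟩)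
  simp only at this
  linarith

lemma exists_cyl_cons_eq_Icc_of_eq_Icc {w : List (Fin m)} {c d : ℝ} (hc : 0 ≤ c) (hcd : c < d)
    (hd : d ≤ 1) (hw : S.cyl w = Icc c d) (i : Fin m) :
    ∃ u v, u < v ∧ Icc u v ⊆ S.I i ∧ S.T u = c ∧ S.T v = d ∧ S.cyl (i :: w) = Icc u v := by
  obtain ⟨u, hu, rfl⟩ := S.hsurj i ⟨hc, hcd.le.trans hd⟩
  obtain ⟨v, hv, rfl⟩ := S.hsurj i ⟨hc.trans hcd.le, hd⟩
  refine ⟨u, v, ((S.strictMonoOn_T i).lt_iff_lt hu hv).1 hcd, (S.ordConnected_I i).out hu hv,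
    rfl, rfl, ?_⟩
  rw [cyl, hw]
  exact (S.strictMonoOn_T i).inter_preimage_Icc (S.ordConnected_I i) hu hv

lemma exists_cyl_eq_Icc (w : List (Fin m)) :
    ∃ c d, 0 ≤ c ∧ c < d ∧ d ≤ 1 ∧ S.cyl w = Icc c d := by
  induction w with
  | nil => exact ⟨0, 1, le_rfl, one_pos, le_rfl, rfl⟩
  | cons i w ih =>
    obtain ⟨c, d, hc, hcd, hd, hw⟩ := ih
    obtain ⟨u, v, huv, hsub, -, -, hcyl⟩ := S.exists_cyl_cons_eq_Icc_of_eq_Icc hc hcd hd hw i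
    have h01 := hsub.trans (S.hIsub i)
    exact ⟨u, v, (h01 (left_mem_Icc.2 huv.le)).1, huv, (h01 (right_mem_Icc.2 huv.le)).2, hcyl⟩

lemma exists_cyl_cons_eq_Icc (i : Fin m) (w : List (Fin m)) :
    ∃ u v, u < v ∧ Icc u v ⊆ S.I i ∧ S.cyl (i :: w) = Icc u v ∧
      S.cyl w = Icc (S.T u) (S.T v) := by
  obtain ⟨c, d, hc, hcd, hd, hw⟩ := S.exists_cyl_eq_Icc w
  obtain ⟨u, v, huv, hsub, rfl, rfl, hcyl⟩ := S.exists_cyl_cons_eq_Icc_of_eq_Icc hc hcd hd hw i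
  exact ⟨u, v, huv, hsub, hcyl, hw⟩

lemma isCompact_cyl (w : List (Fin m)) : IsCompact (S.cyl w) := by
  obtain ⟨c, d, -, -, -, h⟩ := S.exists_cyl_eq_Icc w
  exact h ▸ isCompact_Icc

lemma cyl_nonempty (w : List (Fin m)) : (S.cyl w).Nonempty := by
  obtain ⟨c, d, -, hcd, -, h⟩ := S.exists_cyl_eq_Icc w
  exact h ▸ nonempty_Icc.2 hcd.le

lemma diam_cyl_pos (w : List (Fin m)) : 0 < diam (S.cyl w) := by
  obtain ⟨c, d, -, hcd, -, h⟩ := S.exists_cyl_eq_Icc w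
  rw [h, Real.diam_Icc hcd.le]
  linarith

lemma exists_diam_cyl_lt {ε : ℝ} (hε : 0 < ε) :
    ∃ N : ℕ, ∀ w : List (Fin m), N ≤ w.length → diam (S.cyl w) < ε := by
  obtain ⟨c, hc, hgain⟩ := S.exists_pos_add_le_T_sub_T hε
  -- prepending a letter to a word whose cylinder is `ε`-long shrinks its diameter by `c`
  have key : ∀ w : List (Fin m), diam (S.cyl w) < ε ∨ diam (S.cyl w) + w.length * c ≤ 1 := by
    intro w
    induction w with
    | nil => exact .inr (by simp [cyl, Real.diam_Icc])
    | cons i w ih =>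
      refine (lt_or_ge _ _).imp_right fun h => ?_
      obtain ⟨u, v, huv, hsub, hcons, hw⟩ := S.exists_cyl_cons_eq_Icc i w
      rw [hcons, Real.diam_Icc huv.le] at h ⊢
      have hg := hgain i u (hsub (left_mem_Icc.2 huv.le)) v (hsub (right_mem_Icc.2 huv.le))
        (by linarith)
      rw [hw, Real.diam_Icc (by linarith)] at ih
      push_cast [List.length_cons]
      rcases ih with ih | ih <;> linarith
  obtain ⟨N, hN⟩ := exists_nat_gt (1 / c)
  refine ⟨N, fun w hw => (key w).resolve_right fun h => ?_⟩
  have hlen : 1 < w.length * c := by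
    rw [div_lt_iff₀ hc] at hN
    exact hN.trans_le (by gcongr)
  linarith [S.diam_cyl_pos w]

lemma exists_diam_cyl_eq_T'_mul (i : Fin m) (w : List (Fin m)) :
    ∃ ξ ∈ S.cyl (i :: w), diam (S.cyl w) = S.T' ξ * diam (S.cyl (i :: w)) := by
  obtain ⟨u, v, huv, hsub, hcons, hw⟩ := S.exists_cyl_cons_eq_Icc i w
  obtain ⟨ξ, hξ, hslope⟩ := exists_hasDerivAt_eq_slope S.T S.T' huv
    ((S.continuousOn_T i).mono hsub)
    fun x hx => S.hasDerivAt_of_mem_interior (interior_mono hsub (by rwa [interior_Icc]))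
  have hTuv : S.T u < S.T v := S.strictMonoOn_T i (hsub (left_mem_Icc.2 huv.le))
    (hsub (right_mem_Icc.2 huv.le)) huv
  refine ⟨ξ, hcons ▸ Ioo_subset_Icc_self hξ, ?_⟩
  rw [hw, hcons, Real.diam_Icc hTuv.le, Real.diam_Icc huv.le, hslope,
    div_mul_cancel₀ _ (sub_ne_zero.2 huv.ne')]

lemma cyl_word_subset_iUnion (ω : SymbSp m) {n : ℕ} (hn : n ≠ 0) :
    S.cyl (word ω n) ⊆ ⋃ i, S.I i := by
  obtain ⟨k, rfl⟩ := Nat.exists_eq_succ_of_ne_zero hn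
  rw [word_succ]
  exact inter_subset_left.trans (subset_iUnion _ _)

lemma exists_neg_log_diam_eq_sum (n : ℕ) (ω : SymbSp m) :
    ∃ ξ : ℕ → ℝ, (∀ j < n, ξ j ∈ S.cyl (word (shift^[j] ω) (n - j))) ∧
      -Real.log (diam (S.cyl (word ω n))) = ∑ j ∈ Finset.range n, Real.log (S.T' (ξ j)) := by
  induction n generalizing ω with
  | zero => exact ⟨0, by simp, by simp [cyl, Real.diam_Icc]⟩
  | succ n ih =>
    obtain ⟨ξ, hξ, hsum⟩ := ih (shift ω)
    obtain ⟨ξ₀, hξ₀, hdiam⟩ := S.exists_diam_cyl_eq_T'_mul (ω 0) (word (shift ω) n)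
    refine ⟨fun | 0 => ξ₀ | j + 1 => ξ j, ?_, ?_⟩
    · rintro (_ | j) hj
      · simpa [word_succ] using hξ₀
      · simpa [Function.iterate_succ_apply] using hξ j (by omega)
    · have hT' : 0 < S.T' ξ₀ := one_pos.trans_le (S.one_le_T' hξ₀.1)
      rw [Finset.sum_range_succ', word_succ, ← hsum, hdiam,
        Real.log_mul hT'.ne' (S.diam_cyl_pos _).ne']
      ring

lemma cyl_word_succ_subset (ω : SymbSp m) (n : ℕ) :
    S.cyl (word ω (n + 1)) ⊆ S.cyl (word ω n) := by
  induction n generalizing ω with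
  | zero => rw [word_succ, word_zero]; exact inter_subset_left.trans (S.hIsub _)
  | succ n ih =>
    rw [word_succ ω (n + 1), word_succ ω n]
    exact inter_subset_inter_right _ (preimage_mono (ih _))

lemma code_mem_cyl (ω : SymbSp m) (n : ℕ) : S.code ω ∈ S.cyl (word ω n) := by
  have hclosed : ∀ n, IsClosed (S.cyl (word ω n)) := fun n => (S.isCompact_cyl _).isClosed
  have hne : (⋂ n, S.cyl (word ω n)).Nonempty :=
    IsCompact.nonempty_iInter_of_sequence_nonempty_isCompact_isClosed _
      (S.cyl_word_succ_subset ω) (fun n => S.cyl_nonempty _) (S.isCompact_cyl _) hclosed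
  exact mem_iInter.1 ((isClosed_iInter hclosed).csSup_mem hne
    ((S.isCompact_cyl _).bddAbove.mono (iInter_subset _ 0))) n

lemma exists_abs_log_T'_sub_le {η : ℝ} (hη : 0 < η) : ∃ K : ℕ, ∀ w : List (Fin m),
    K ≤ w.length → ∀ x ∈ S.cyl w, ∀ y ∈ S.cyl w,
      |Real.log (S.T' x) - Real.log (S.T' y)| ≤ η := by
  obtain ⟨δ, hδ, hunif⟩ := Metric.uniformContinuousOn_iff.1
    ((isCompact_iUnion S.isCompact_I).uniformContinuousOn_of_continuous S.continuousOn_log_T') η hη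
  obtain ⟨N, hN⟩ := S.exists_diam_cyl_lt hδ
  refine ⟨N + 1, ?_⟩
  rintro (_ | ⟨i, w⟩) hlen x hx y hy
  · simp at hlen
  have hU : S.cyl (i :: w) ⊆ ⋃ i, S.I i := inter_subset_left.trans (subset_iUnion _ _)
  have hdist := (dist_le_diam_of_mem (S.isCompact_cyl _).isBounded hx hy).trans_lt
    (hN _ (by omega))
  exact (hunif x (hU hx) y (hU hy) hdist).le

lemma eventually_abs_neg_log_diam_div_sub_birkhoff_le {η : ℝ} (hη : 0 < η) :
    ∀ᶠ n : ℕ in atTop, ∀ ω : SymbSp m,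
      |(-(Real.log (diam (S.cyl (word ω n))))) / n - birkhoff shift S.g n ω| ≤ η := by
  obtain ⟨K, hK⟩ := S.exists_abs_log_T'_sub_le (half_pos hη)
  obtain ⟨C, hC⟩ := (isCompact_iUnion S.isCompact_I).exists_bound_of_continuousOn
    S.continuousOn_log_T'
  have hsmall : ∀ᶠ n : ℕ in atTop, K * (2 * C) / n < η / 2 :=
    (tendsto_const_div_atTop_nhds_zero_nat _).eventually (gt_mem_nhds (half_pos hη))
  filter_upwards [hsmall, eventually_ge_atTop (K + 1)] with n hsmall hn ω
  obtain ⟨ξ, hξ, hlog⟩ := S.exists_neg_log_diam_eq_sum n ω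
  have hcode : ∀ j, S.code (shift^[j] ω) ∈ S.cyl (word (shift^[j] ω) (n - j)) :=
    fun j => S.code_mem_cyl _ _
  have hall : ∀ j < n, |Real.log (S.T' (ξ j)) - S.g (shift^[j] ω)| ≤ 2 * C := by
    intro j hj
    have hU := S.cyl_word_subset_iUnion (shift^[j] ω) (n := n - j) (by omega)
    have h1 := hC _ (hU (hξ j hj))
    have h2 := hC _ (hU (hcode j))
    rw [Real.norm_eq_abs] at h1 h2
    exact (abs_sub _ _).trans (by unfold g; linarith)
  have hhead : ∀ j < n - K, |Real.log (S.T' (ξ j)) - S.g (shift^[j] ω)| ≤ η / 2 :=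
    fun j hj => hK _ (by simp only [length_word]; omega) _ (hξ j (by omega)) _ (hcode j)
  have hsum := abs_sum_range_le_of_head (by omega) (half_pos hη).le hhead hall
  have hn0 : (0 : ℝ) < n := by exact_mod_cast (by omega : 0 < n)
  rw [div_lt_iff₀ hn0] at hsmall
  rw [hlog, birkhoff, smul_eq_mul, ← div_eq_inv_mul, div_sub_div_same,
    ← Finset.sum_sub_distrib, abs_div, abs_of_pos hn0, div_le_iff₀ hn0]
  linarith

end PCSystem

/-- **Lemma 2 (Statement 5).** The diameters `D_n(ω) = diam I_{ω|_n}` tend to `0`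
uniformly in `ω`, and `sup_ω |−(1/n) log D_n(ω) − A_n g(ω)| → 0`. -/
theorem statement5 {m : ℕ} (S : PCSystem m) :
    (∀ ε : ℝ, 0 < ε → ∃ N : ℕ, ∀ n ≥ N, ∀ ω : SymbSp m,
        Metric.diam (S.cyl (word ω n)) < ε) ∧
    Tendsto (fun n : ℕ => ⨆ ω : SymbSp m,
        |(-(Real.log (Metric.diam (S.cyl (word ω n))))) / n - birkhoff shift S.g n ω|)
      atTop (𝓝 0) := by
  refine ⟨fun ε hε => ?_, ?_⟩
  · obtain ⟨N, hN⟩ := S.exists_diam_cyl_lt hε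
    exact ⟨N, fun n hn ω => hN _ (by rwa [length_word])⟩
  · refine tendsto_order.2 ⟨fun a ha => Eventually.of_forall fun n =>
      ha.trans_le (Real.iSup_nonneg fun ω => abs_nonneg _), fun a ha => ?_⟩
    filter_upwards [S.eventually_abs_neg_log_diam_div_sub_birkhoff_le (half_pos ha)] with n hn
    exact (Real.iSup_le hn (half_pos ha).le).trans_lt (half_lt_self ha)
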